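/- For each fixed β ∈ (0, 1/2) and p > 2 there exists a positive real constant d₄ such that ( (4/(π R²)) · ∫_{R_β(R)}^{R} ρ·(ρ²−1)^{−p/2}·(ρ/√(ρ²−1)) dρ )^{1/p} / ( R^{−2(1+β(p−2))/p} · (log R)^{β(p−2)/p} ) → d₄ as R → ∞. In particular this Lᵖ gradient quantity of the truncated graphical part of the catenoid grows faster than E(R)^{1/2}. -/

import Mathlib

/-!
Integrating the excess density explicitly, `∫₁^R = R√(R²−1) − R² + arcosh R + 1 = log R + O(1)`,
so `E(R) ~ (4/π) log R / R²`; hence `E(R) → 0⁺`, `R_β(R) → ∞`, and `R_β(R) < R` eventually.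
For `ρ > 1` the gradient density is `ρ^(1−p) (1 − ρ⁻²)^(−(p+1)/2)`, squeezed on `[R_β, R]` between
`ρ^(1−p)` and `(1 − R_β⁻²)^(−(p+1)/2) ρ^(1−p)`, so the integral is asymptotic to
`∫ ρ^(1−p) = (R_β^(2−p) − R^(2−p))/(p−2)`. Finally `R_β^(2−p) = E^(β(p−2)) (1 + E^(2β))^((2−p)/2)`,
while `R^(2−p)` is negligible because `β < 1/2`; the limit is `(4/(π(p−2)) · (4/π)^(β(p−2)))^(1/p)`.
-/

open MeasureTheory Filter

/-- The scale-invariant cylindrical tilt-excess of the 2-dimensional catenoid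
`{(x,y,z) : √(x²+y²) = cosh z}` in the cylinder of radius `R`, relative to the
horizontal plane `{z = 0}`. -/
noncomputable def catExcess (R : ℝ) : ℝ :=
  (4 / (Real.pi * R ^ 2)) *
    ∫ ρ in (1:ℝ)..R, ρ * (2 - 2 * Real.sqrt (ρ ^ 2 - 1) / ρ) * (ρ / Real.sqrt (ρ ^ 2 - 1))

/-- The radius `R_β(R)`, determined by `1/√(R_β² − 1) = E(R)^β`,
i.e. `R_β = √(1 + E(R)^(−2β))`. -/
noncomputable def Rbeta (β R : ℝ) : ℝ :=
  Real.sqrt (1 + catExcess R ^ (-(2 * β)))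

open Real Topology Set intervalIntegral

noncomputable def excessDensity (ρ : ℝ) : ℝ :=
  ρ * (2 - 2 * √(ρ ^ 2 - 1) / ρ) * (ρ / √(ρ ^ 2 - 1))

noncomputable def excessPrimitive (x : ℝ) : ℝ :=
  x * √(x ^ 2 - 1) - x ^ 2 + arcosh x

lemma excessDensity_eq {ρ : ℝ} (hρ : 1 < ρ) :
    excessDensity ρ = 2 * ρ ^ 2 / √(ρ ^ 2 - 1) - 2 * ρ := by
  have hs : √(ρ ^ 2 - 1) ≠ 0 := (sqrt_pos.2 (by nlinarith)).ne'
  unfold excessDensity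
  field_simp

lemma excessDensity_nonneg {ρ : ℝ} (hρ : 1 < ρ) : 0 ≤ excessDensity ρ := by
  have hs : 0 < √(ρ ^ 2 - 1) := sqrt_pos.2 (by nlinarith)
  have hsρ : √(ρ ^ 2 - 1) ≤ ρ := (sqrt_le_left (by linarith)).2 (by linarith)
  rw [excessDensity_eq hρ, sub_nonneg, le_div_iff₀ hs]
  nlinarith

lemma hasDerivAt_excessPrimitive {x : ℝ} (hx : 1 < x) :
    HasDerivAt excessPrimitive (excessDensity x) x := by
  have hx2 : x ^ 2 - 1 ≠ 0 := by nlinarith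
  have hs : √(x ^ 2 - 1) ≠ 0 := (sqrt_pos.2 (by nlinarith)).ne'
  have hsq : √(x ^ 2 - 1) ^ 2 = x ^ 2 - 1 := sq_sqrt (by nlinarith)
  have hsqrt : HasDerivAt (fun y => √(y ^ 2 - 1)) (2 * x / (2 * √(x ^ 2 - 1))) x := by
    simpa using ((hasDerivAt_pow 2 x).sub_const 1).sqrt hx2
  refine ((((hasDerivAt_id x).mul hsqrt).sub (hasDerivAt_pow 2 x)).add
    (hasDerivAt_arcosh (mem_Ioi.2 hx))).congr_deriv ?_
  rw [excessDensity_eq hx]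
  field_simp
  rw [hsq]
  norm_num
  ring

lemma continuousOn_excessPrimitive : ContinuousOn excessPrimitive (Ici 1) := by
  unfold excessPrimitive
  exact ContinuousOn.add (by fun_prop) continuousOn_arcosh

lemma integral_excessDensity {R : ℝ} (hR : 1 ≤ R) :
    ∫ ρ in (1:ℝ)..R, excessDensity ρ = excessPrimitive R + 1 := by
  have hderiv : ∀ x ∈ Ioo 1 R, HasDerivAt excessPrimitive (excessDensity x) x :=
    fun x hx => hasDerivAt_excessPrimitive hx.1
  have hcont : ContinuousOn excessPrimitive (Icc 1 R) :=
    continuousOn_excessPrimitive.mono Icc_subset_Ici_self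
  rw [integral_eq_sub_of_hasDerivAt_of_le hR hcont hderiv
    ((intervalIntegrable_iff_integrableOn_Ioc_of_le hR).2 <| integrableOn_deriv_of_nonneg hcont
      hderiv fun x hx => excessDensity_nonneg hx.1)]
  simp [excessPrimitive]

lemma catExcess_eq {R : ℝ} (hR : 1 ≤ R) :
    catExcess R = 4 / (π * R ^ 2) * (excessPrimitive R + 1) :=
  congrArg _ (integral_excessDensity hR)

lemma log_le_excessPrimitive_add_one {R : ℝ} (hR : 1 ≤ R) :
    log R ≤ excessPrimitive R + 1 := by
  have hs : 0 ≤ √(R ^ 2 - 1) := sqrt_nonneg _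
  have hsR : √(R ^ 2 - 1) ≤ R := (sqrt_le_left (by linarith)).2 (by linarith)
  have hsq : √(R ^ 2 - 1) ^ 2 = R ^ 2 - 1 := sq_sqrt (by nlinarith)
  have harcosh : log R ≤ arcosh R := by
    rw [← exp_le_exp, exp_log (by linarith), exp_arcosh hR]
    linarith
  unfold excessPrimitive
  nlinarith

lemma excessPrimitive_le {R : ℝ} (hR : 1 ≤ R) : excessPrimitive R ≤ log R + log 2 := by
  have hsR : √(R ^ 2 - 1) ≤ R := (sqrt_le_left (by linarith)).2 (by linarith)
  have harcosh : arcosh R ≤ log R + log 2 := by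
    rw [← log_mul (by linarith) two_ne_zero, ← exp_le_exp, exp_log (by linarith), exp_arcosh hR]
    linarith
  unfold excessPrimitive
  nlinarith [sqrt_nonneg (R ^ 2 - 1)]

lemma tendsto_excessPrimitive_add_one_div_log :
    Tendsto (fun R => (excessPrimitive R + 1) / log R) atTop (𝓝 1) := by
  have hupper : Tendsto (fun R => 1 + (1 + log 2) / log R) atTop (𝓝 1) := by
    simpa using tendsto_const_nhds.add (tendsto_const_nhds.div_atTop tendsto_log_atTop)
  refine tendsto_of_tendsto_of_tendsto_of_le_of_le' tendsto_const_nhds hupper ?_ ?_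
  all_goals filter_upwards [eventually_gt_atTop 1] with R hR
  · rw [le_div_iff₀ (log_pos hR), one_mul]
    exact log_le_excessPrimitive_add_one hR.le
  · rw [div_le_iff₀ (log_pos hR), add_mul, div_mul_cancel₀ _ (log_pos hR).ne']
    linarith [excessPrimitive_le hR.le]

lemma tendsto_catExcess_mul_sq_div_log :
    Tendsto (fun R => catExcess R * R ^ 2 / log R) atTop (𝓝 (4 / π)) := by
  have h := tendsto_excessPrimitive_add_one_div_log.const_mul (4 / π)
  rw [mul_one] at h
  refine h.congr' ?_
  filter_upwards [eventually_gt_atTop 1] with R hR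
  rw [catExcess_eq hR.le]
  field_simp

lemma catExcess_pos {R : ℝ} (hR : 1 < R) : 0 < catExcess R := by
  rw [catExcess_eq hR.le]
  exact mul_pos (by positivity) ((log_pos hR).trans_le (log_le_excessPrimitive_add_one hR.le))

lemma tendsto_catExcess_nhdsGT_zero : Tendsto catExcess atTop (𝓝[>] 0) := by
  have hlog : Tendsto (fun R => log R / R ^ 2) atTop (𝓝 0) := by
    simpa [rpow_two] using (isLittleO_log_rpow_atTop two_pos).tendsto_div_nhds_zero
  refine tendsto_nhdsWithin_iff.2 ⟨?_, (eventually_gt_atTop 1).mono fun R => catExcess_pos⟩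
  have h := tendsto_catExcess_mul_sq_div_log.mul hlog
  rw [mul_zero] at h
  refine h.congr' ?_
  filter_upwards [eventually_gt_atTop 1] with R hR
  have := log_pos hR
  field_simp

lemma tendsto_Rbeta_atTop {β : ℝ} (hβ : 0 < β) : Tendsto (Rbeta β) atTop atTop :=
  tendsto_sqrt_atTop.comp <| tendsto_atTop_add_const_left _ 1 <|
    (tendsto_rpow_neg_nhdsGT_zero (by linarith)).comp tendsto_catExcess_nhdsGT_zero

lemma eventually_Rbeta_lt {β : ℝ} (hβ : β ≤ 1 / 2) : ∀ᶠ R in atTop, Rbeta β R < R := by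
  have h4π : 1 < 4 / π := by rw [one_lt_div pi_pos]; linarith [pi_lt_four]
  filter_upwards [tendsto_catExcess_mul_sq_div_log.eventually (eventually_gt_nhds h4π),
    (tendsto_nhds_of_tendsto_nhdsWithin tendsto_catExcess_nhdsGT_zero).eventually
      (eventually_lt_nhds one_pos),
    tendsto_log_atTop.eventually_ge_atTop 2, eventually_gt_atTop 2] with R hX hE1 hlog hR
  have hE := catExcess_pos (by linarith : 1 < R)
  have hl : 0 < log R := by linarith
  have hEinv : catExcess R ^ (-(2 * β)) ≤ (catExcess R)⁻¹ := by
    rw [← rpow_neg_one]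
    exact rpow_le_rpow_of_exponent_ge hE hE1.le (by linarith)
  have hinv : (catExcess R)⁻¹ < R ^ 2 / 2 := by
    rw [one_lt_div hl] at hX
    rw [inv_lt_iff_one_lt_mul₀ hE]
    nlinarith
  rw [Rbeta, sqrt_lt' (by linarith)]
  nlinarith

lemma one_lt_Rbeta {β R : ℝ} (hR : 1 < R) : 1 < Rbeta β R := by
  rw [Rbeta, lt_sqrt zero_le_one, one_pow, lt_add_iff_pos_right]
  exact rpow_pos_of_pos (catExcess_pos hR) _

noncomputable def gradDensity (p ρ : ℝ) : ℝ :=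
  ρ * (ρ ^ 2 - 1) ^ (-p / 2) * (ρ / √(ρ ^ 2 - 1))

lemma gradDensity_eq {p ρ : ℝ} (hρ : 1 < ρ) :
    gradDensity p ρ = ρ ^ (1 - p) * (1 - (ρ ^ 2)⁻¹) ^ (-((p + 1) / 2)) := by
  have hρ0 : 0 < ρ := by linarith
  set q := 1 - (ρ ^ 2)⁻¹
  have hq : 0 < q := sub_pos.2 (inv_lt_one_of_one_lt₀ (by nlinarith))
  have hsplit : ρ ^ 2 - 1 = ρ ^ 2 * q := by
    rw [mul_sub, mul_inv_cancel₀ (by positivity), mul_one]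
  have hpow : (ρ ^ 2 - 1) ^ (-p / 2) = ρ ^ (-p) * q ^ (-p / 2) := by
    rw [hsplit, mul_rpow (by positivity) hq.le, ← rpow_natCast, ← rpow_mul hρ0.le]
    congr 2
    push_cast
    ring
  have hsqrt : √(ρ ^ 2 - 1) = ρ * √q := by
    rw [hsplit, sqrt_mul (by positivity), sqrt_sq hρ0.le]
  have hq_pow : q ^ (-((p + 1) / 2)) = q ^ (-p / 2) / √q := by
    rw [sqrt_eq_rpow, ← rpow_sub hq]
    ring_nf
  have hρ_pow : ρ ^ (1 - p) = ρ * ρ ^ (-p) := by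
    rw [sub_eq_add_neg, rpow_add hρ0, rpow_one]
  have : 0 < √q := sqrt_pos.2 hq
  rw [gradDensity, hpow, hsqrt, hq_pow, hρ_pow]
  field_simp

lemma rpow_le_gradDensity {p ρ : ℝ} (hp : -1 ≤ p) (hρ : 1 < ρ) :
    ρ ^ (1 - p) ≤ gradDensity p ρ := by
  have hq : 0 < 1 - (ρ ^ 2)⁻¹ := sub_pos.2 (inv_lt_one_of_one_lt₀ (by nlinarith))
  rw [gradDensity_eq hρ]
  refine le_mul_of_one_le_right (by positivity) ?_
  exact one_le_rpow_of_pos_of_le_one_of_nonpos hq (sub_le_self _ (by positivity)) (by linarith)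

lemma gradDensity_le {p a ρ : ℝ} (hp : -1 ≤ p) (ha : 1 < a) (haρ : a ≤ ρ) :
    gradDensity p ρ ≤ (1 - (a ^ 2)⁻¹) ^ (-((p + 1) / 2)) * ρ ^ (1 - p) := by
  have hqa : 0 < 1 - (a ^ 2)⁻¹ := sub_pos.2 (inv_lt_one_of_one_lt₀ (by nlinarith))
  have ha0 : 0 < a := by linarith
  have hqaρ : 1 - (a ^ 2)⁻¹ ≤ 1 - (ρ ^ 2)⁻¹ :=
    sub_le_sub_left (inv_anti₀ (pow_pos ha0 2) (pow_le_pow_left₀ ha0.le haρ 2)) 1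
  rw [gradDensity_eq (ha.trans_le haρ), mul_comm]
  have hexp : -((p + 1) / 2) ≤ 0 := by linarith
  exact mul_le_mul_of_nonneg_right (rpow_le_rpow_of_nonpos hqa hqaρ hexp)
    (rpow_nonneg (by linarith) _)

lemma continuousOn_gradDensity {p a b : ℝ} (ha : 1 < a) :
    ContinuousOn (gradDensity p) (Icc a b) := by
  have hpos : ∀ x ∈ Icc a b, 0 < x ^ 2 - 1 := fun x hx => by nlinarith [hx.1]
  unfold gradDensity
  have hsq : ContinuousOn (fun x : ℝ => x ^ 2 - 1) (Icc a b) := by fun_prop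
  exact (continuousOn_id.mul (hsq.rpow_const fun x hx => Or.inl (hpos x hx).ne')).mul
    (continuousOn_id.div hsq.sqrt fun x hx => (sqrt_pos.2 (hpos x hx)).ne')

lemma tendsto_integral_gradDensity_div_integral_rpow {α : Type*} {l : Filter α} {p : ℝ}
    (hp : -1 ≤ p) {a b : α → ℝ} (ha : Tendsto a l atTop) (hab : ∀ᶠ x in l, a x < b x) :
    Tendsto (fun x => (∫ ρ in a x..b x, gradDensity p ρ) / ∫ ρ in a x..b x, ρ ^ (1 - p))
      l (𝓝 1) := by
  set M : ℝ → ℝ := fun a => (1 - (a ^ 2)⁻¹) ^ (-((p + 1) / 2))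
  have hM : Tendsto (fun x => M (a x)) l (𝓝 1) := by
    have h := ((tendsto_inv_atTop_zero.comp ((tendsto_pow_atTop two_ne_zero).comp ha)).const_sub
      1).rpow_const (p := -((p + 1) / 2)) (Or.inl (by norm_num))
    simpa using h
  refine tendsto_of_tendsto_of_tendsto_of_le_of_le' tendsto_const_nhds hM ?_ ?_ <;>
    filter_upwards [hab, ha.eventually_gt_atTop 1] with x hab ha1
  all_goals
    have hpow : IntervalIntegrable (fun ρ : ℝ => ρ ^ (1 - p)) volume (a x) (b x) :=
      ((continuousOn_id.rpow_const fun ρ hρ =>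
        Or.inl (ne_of_gt (by simp only [id]; linarith [hρ.1]))).mono
          (uIcc_of_le hab.le).subset).intervalIntegrable
    have hK : 0 < ∫ ρ in a x..b x, ρ ^ (1 - p) :=
      intervalIntegral_pos_of_pos_on hpow (fun ρ hρ => rpow_pos_of_pos (by linarith [hρ.1]) _) hab
    have hgrad : IntervalIntegrable (gradDensity p) volume (a x) (b x) :=
      (continuousOn_gradDensity ha1 |>.mono (uIcc_of_le hab.le).subset).intervalIntegrable
  · rw [le_div_iff₀ hK, one_mul]
    exact integral_mono_on hab.le hpow hgrad fun ρ hρ =>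
      rpow_le_gradDensity hp (by linarith [hρ.1])
  · rw [div_le_iff₀ hK, ← intervalIntegral.integral_const_mul]
    exact integral_mono_on hab.le hgrad (hpow.const_mul _) fun ρ hρ => gradDensity_le hp ha1 hρ.1

lemma integral_rpow_one_sub {p a b : ℝ} (hp : p ≠ 2) (ha : 0 < a) (hb : 0 < b) :
    ∫ ρ in a..b, ρ ^ (1 - p) = (a ^ (2 - p) - b ^ (2 - p)) / (p - 2) := by
  have h0 : (0 : ℝ) ∉ uIcc a b := fun h => by
    rcases le_total a b with hab | hab
    · rw [uIcc_of_le hab] at h; linarith [h.1]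
    · rw [uIcc_of_ge hab] at h; linarith [h.1]
  rw [integral_rpow (Or.inr ⟨by contrapose! hp; linarith, h0⟩),
    show 1 - p + 1 = 2 - p by ring, div_eq_div_iff (sub_ne_zero.2 hp.symm) (sub_ne_zero.2 hp)]
  ring

lemma sqrt_one_add_rpow_neg_rpow {t : ℝ} (ht : 0 < t) (s q : ℝ) :
    √(1 + t ^ (-s)) ^ q = t ^ (-(s * q / 2)) * (1 + t ^ s) ^ (q / 2) := by
  have hsplit : 1 + t ^ (-s) = t ^ (-s) * (1 + t ^ s) := by
    rw [mul_add, mul_one, ← rpow_add ht, neg_add_cancel, rpow_zero, add_comm]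
  rw [hsplit, sqrt_eq_rpow, ← rpow_mul (by positivity), mul_rpow (by positivity) (by positivity),
    ← rpow_mul ht.le]
  ring_nf

lemma rpow_neg_two_mul_mul_rpow_eq_inv {R ℓ c : ℝ} (hR : 0 < R) (hℓ : 0 < ℓ) :
    R ^ (-2 * (1 + c)) * ℓ ^ c = (R ^ 2 * (R ^ 2 / ℓ) ^ c)⁻¹ := by
  rw [div_rpow (by positivity) hℓ.le, ← rpow_natCast, ← rpow_mul hR.le,
    show -2 * (1 + c) = -((2 : ℕ) + (2 : ℕ) * c) by push_cast; ring, rpow_neg hR.le,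
    rpow_add hR]
  field_simp

lemma tendsto_sq_div_log_rpow_mul_rpow {c q : ℝ} (hc : 0 ≤ c) (hcq : 2 * c + q < 0) :
    Tendsto (fun R => (R ^ 2 / log R) ^ c * R ^ q) atTop (𝓝 0) := by
  have hupper : Tendsto (fun R : ℝ => R ^ (-(-(2 * c + q)))) atTop (𝓝 0) :=
    tendsto_rpow_neg_atTop (by linarith)
  rw [neg_neg] at hupper
  refine tendsto_of_tendsto_of_tendsto_of_le_of_le' tendsto_const_nhds hupper ?_ ?_ <;>
    filter_upwards [eventually_gt_atTop 0, tendsto_log_atTop.eventually_ge_atTop 1] with R hR hlog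
  · have : 0 < log R := by linarith
    positivity
  · rw [rpow_add hR, rpow_mul hR.le, rpow_two]
    refine mul_le_mul_of_nonneg_right (rpow_le_rpow (by positivity) ?_ hc) (by positivity)
    exact div_le_self (by positivity) hlog

lemma tendsto_normalized_integral_rpow {β p : ℝ} (hβ : β ∈ Ioo (0 : ℝ) (1 / 2)) (hp : 2 < p) :
    Tendsto (fun R => 4 / (π * R ^ 2) * (∫ ρ in Rbeta β R..R, ρ ^ (1 - p)) /
        (R ^ (-2 * (1 + β * (p - 2))) * log R ^ (β * (p - 2))))
      atTop (𝓝 (4 / (π * (p - 2)) * (4 / π) ^ (β * (p - 2)))) := by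
  obtain ⟨hβ0, hβ1⟩ := hβ
  set c := β * (p - 2)
  have hE := tendsto_nhds_of_tendsto_nhdsWithin tendsto_catExcess_nhdsGT_zero
  have hcorr : Tendsto (fun R => (1 + catExcess R ^ (2 * β)) ^ ((2 - p) / 2)) atTop (𝓝 1) := by
    have h := ((hE.rpow_const (p := 2 * β) (Or.inr (by positivity))).const_add 1).rpow_const
      (p := (2 - p) / 2) (Or.inl (by norm_num [zero_rpow (by positivity : 2 * β ≠ 0)]))
    simpa [zero_rpow (by positivity : 2 * β ≠ 0)] using h
  have hmain := (tendsto_catExcess_mul_sq_div_log.rpow_const (p := c)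
    (Or.inl (by positivity))).mul hcorr
  have hrest := tendsto_sq_div_log_rpow_mul_rpow (q := 2 - p) (by positivity : 0 ≤ c)
    (by nlinarith)
  have h := (hmain.sub hrest).const_mul (4 / (π * (p - 2)))
  rw [mul_one, sub_zero] at h
  refine h.congr' ?_
  filter_upwards [eventually_gt_atTop 1] with R hR
  have hR0 : 0 < R := by linarith
  have hl : 0 < log R := log_pos hR
  have hE0 := catExcess_pos hR
  have hRb : 0 < Rbeta β R := sqrt_pos.2 (by positivity)
  rw [integral_rpow_one_sub hp.ne' hRb hR0, Rbeta, sqrt_one_add_rpow_neg_rpow hE0,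
    rpow_neg_two_mul_mul_rpow_eq_inv hR0 hl, mul_div_assoc (catExcess R),
    mul_rpow hE0.le (by positivity), show -(2 * β * (2 - p) / 2) = c by ring]
  have : (p - 2) ≠ 0 := by linarith
  field_simp

lemma rpow_one_div_div_rpow_mul_rpow {A x y a b p : ℝ} (hA : 0 ≤ A) (hx : 0 < x) (hy : 0 < y) :
    A ^ (1 / p) / (x ^ (a / p) * y ^ (b / p)) = (A / (x ^ a * y ^ b)) ^ (1 / p) := by
  rw [div_rpow hA (by positivity), mul_rpow (by positivity) (by positivity), ← rpow_mul hx.le,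
    ← rpow_mul hy.le, mul_one_div, mul_one_div]

/-- For each fixed `β ∈ (0,1/2)` and `p > 2` there is a positive constant `d₄` such that
`((4/(πR²))·∫_{R_β}^R ρ·(ρ²−1)^{−p/2}·(ρ/√(ρ²−1)) dρ)^{1/p}` divided by
`R^{−2(1+β(p−2))/p}·(log R)^{β(p−2)/p}` tends to `d₄` as `R → ∞`. -/
theorem catenoid_Lp_gradient_asymptotics (β p : ℝ) (hβ : β ∈ Set.Ioo (0:ℝ) (1/2))
    (hp : 2 < p) :
    ∃ d₄ : ℝ, 0 < d₄ ∧
      Tendsto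
        (fun R : ℝ =>
          ((4 / (Real.pi * R ^ 2)) *
              ∫ ρ in (Rbeta β R)..R,
                ρ * (ρ ^ 2 - 1) ^ (-p / 2) * (ρ / Real.sqrt (ρ ^ 2 - 1))) ^ (1 / p) /
            (R ^ (-2 * (1 + β * (p - 2)) / p) * Real.log R ^ (β * (p - 2) / p)))
        atTop (nhds d₄) := by
  have hp2 : 0 < p - 2 := by linarith
  have hL : 0 < 4 / (π * (p - 2)) * (4 / π) ^ (β * (p - 2)) := by positivity
  have hlim := (tendsto_integral_gradDensity_div_integral_rpow (by linarith : -1 ≤ p)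
    (tendsto_Rbeta_atTop hβ.1) (eventually_Rbeta_lt hβ.2.le)).mul
    (tendsto_normalized_integral_rpow hβ hp)
  rw [one_mul] at hlim
  refine ⟨_, rpow_pos_of_pos hL (1 / p), (hlim.rpow_const (Or.inl hL.ne')).congr' ?_⟩
  filter_upwards [eventually_gt_atTop 1, eventually_Rbeta_lt hβ.2.le] with R hR hRb
  show _ = (4 / (π * R ^ 2) * ∫ ρ in Rbeta β R..R, gradDensity p ρ) ^ (1 / p) / _
  have hRb1 := one_lt_Rbeta (β := β) hR
  have hI : 0 ≤ ∫ ρ in Rbeta β R..R, gradDensity p ρ := integral_nonneg hRb.le fun ρ hρ =>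
    (rpow_pos_of_pos (by linarith [hρ.1]) _).le.trans (rpow_le_gradDensity (by linarith)
      (by linarith [hρ.1]))
  have hK : 0 < ∫ ρ in Rbeta β R..R, ρ ^ (1 - p) := by
    rw [integral_rpow_one_sub hp.ne' (by linarith) (by linarith)]
    exact div_pos (sub_pos.2 (rpow_lt_rpow_of_neg (by linarith) hRb (by linarith))) hp2
  rw [rpow_one_div_div_rpow_mul_rpow (by positivity) (by linarith) (log_pos hR)]
  congr 1
  field_simp
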